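/- Let G be a finite graph with q-state Potts Hamiltonian h(σ) = −Σ_{{i,j}∈E} J_{ij} δ(σ_i,σ_j) − Σ_i Σ_{α=1}^q M_{i,α} δ(α,σ_i) and partition function Z_ext(G) = Σ_σ e^{−βh(σ)}. Then Z_ext admits the spanning forest expansion Z_ext(G) = Σ_{F∈F(G)} X(F) · (∏_{e∈F}(e^{βJ_e} − 1)) · (∏_{e externally active w.r.t. F} e^{βJ_e}), where for each spanning forest F with components F_1,…,F_k, X(F) = ∏_i X_{c_i}, c_i is the sum of the field vectors M over the vertices of F_i, and X_M = Σ_{α=1}^q e^{βM_α}. -/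

import Mathlib

open scoped Classical
open Finset

structure PottsGraph (V E : Type) where
  ends : E → Sym2 V

namespace PottsGraph

variable {V E S R : Type} [Fintype V] [Fintype E]

/-- Two vertices are joined by an edge of `A`. -/
def adjRel (G : PottsGraph V E) (A : Finset E) (u v : V) : Prop :=
  ∃ e ∈ A, G.ends e = s(u, v)

/-- The setoid on vertices whose classes are the connected components of the
spanning subgraph `(V, A)`. -/
def compSetoid (G : PottsGraph V E) (A : Finset E) : Setoid V :=
  ⟨Relation.EqvGen (G.adjRel A), Relation.EqvGen.is_equivalence _⟩

/-- The connected components of the spanning subgraph `(V, A)`. -/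
def Comp (G : PottsGraph V E) (A : Finset E) : Type := Quotient (G.compSetoid A)

noncomputable instance (G : PottsGraph V E) (A : Finset E) : Fintype (G.Comp A) :=
  @Quotient.fintype V _ (G.compSetoid A) (Classical.decRel _)

/-- `k(A)`: the number of connected components of the spanning subgraph `(V, A)`. -/
noncomputable def kA (G : PottsGraph V E) (A : Finset E) : ℕ := Nat.card (G.Comp A)

/-- `u` and `v` are connected in the spanning subgraph `(V, A)`. -/
def Connects (G : PottsGraph V E) (A : Finset E) (u v : V) : Prop :=
  Relation.EqvGen (G.adjRel A) u v

/-- The endpoints of `e` are connected in the spanning subgraph `(V, A)`. -/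
def EndsConnected (G : PottsGraph V E) (A : Finset E) (e : E) : Prop :=
  ∃ u v, G.ends e = s(u, v) ∧ G.Connects A u v

def IsLoop (G : PottsGraph V E) (e : E) : Prop := (G.ends e).IsDiag

/-- `(V, A)` is a forest (acyclic spanning subgraph): every edge of `A` is a bridge of it. -/
def IsForest (G : PottsGraph V E) (A : Finset E) : Prop :=
  ∀ e ∈ A, ¬ G.EndsConnected (A.erase e) e

/-- All vertices are pairwise connected using edges of `A`. -/
def ConnectsAll (G : PottsGraph V E) (A : Finset E) : Prop := ∀ u v, G.Connects A u v

/-- A maximal spanning forest: a forest restricting to a spanning tree of each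
connected component of `G`. -/
def IsSpanningTree (G : PottsGraph V E) (T : Finset E) : Prop :=
  G.IsForest T ∧ ∀ u v, G.Connects T u v ↔ G.Connects Finset.univ u v

/-- `e ∈ T` is internally active: `e` is minimal in the cut
`{f : (T - e) ∪ {f} ∈ 𝒯(G)}`. -/
def IntActive [LinearOrder E] (G : PottsGraph V E) (T : Finset E) (e : E) : Prop :=
  e ∈ T ∧ ∀ f, G.IsSpanningTree (insert f (T.erase e)) → e ≤ f

/-- The edge set of the unique cycle of `T ∪ {e}` (when it exists):
`e` together with those `f ∈ T` whose removal disconnects the ends of `e`. -/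
noncomputable def cycleEdges (G : PottsGraph V E) (T : Finset E) (e : E) : Finset E :=
  insert e (T.filter fun f => ¬ G.EndsConnected (T.erase f) e)

/-- `e ∉ T` is externally active: `T ∪ {e}` contains a cycle through `e` and
`e` is the minimal edge of that cycle. -/
def ExtActive [LinearOrder E] (G : PottsGraph V E) (T : Finset E) (e : E) : Prop :=
  e ∉ T ∧ G.EndsConnected T e ∧ ∀ f ∈ G.cycleEdges T e, e ≤ f

/-- The vertex set of the component `c` of `(V, A)`. -/
noncomputable def compVerts (G : PottsGraph V E) (A : Finset E) (c : G.Comp A) : Finset V :=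
  Finset.univ.filter fun v => (Quotient.mk (G.compSetoid A) v) = c

/-- The total vertex weight of the component `c` of `(V, A)`. -/
noncomputable def compWeight [AddCommMonoid S] (G : PottsGraph V E) (A : Finset E)
    (ω : V → S) (c : G.Comp A) : S :=
  ∑ v ∈ G.compVerts A c, ω v

/-- The V-polynomial, defined by its state sum. -/
noncomputable def Vpoly [AddCommMonoid S] [CommRing R] (G : PottsGraph V E)
    (ω : V → S) (γ : E → R) : MvPolynomial S R :=
  ∑ A : Finset E, (∏ c : G.Comp A, MvPolynomial.X (G.compWeight A ω c)) *
    MvPolynomial.C (∏ e ∈ A, γ e)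

/-- The multivariate Tutte polynomial `Z_T(G; q, γ)` as a polynomial in `q`. -/
noncomputable def ZT [CommRing R] (G : PottsGraph V E) (γ : E → R) : Polynomial R :=
  ∑ A : Finset E, Polynomial.X ^ (G.kA A) * Polynomial.C (∏ e ∈ A, γ e)

/-- Deletion of the edge `e`. -/
def del (G : PottsGraph V E) (e : E) : PottsGraph V {f : E // f ≠ e} := ⟨fun f => G.ends f.1⟩

/-- Contraction of the edge `e`: vertices are the components of `(V, {e})`. -/
noncomputable def contract (G : PottsGraph V E) (e : E) : PottsGraph (G.Comp {e}) {f : E // f ≠ e} :=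
  ⟨fun f => (G.ends f.1).map (Quotient.mk (G.compSetoid {e}))⟩

/-- The forest `T` with the edges of `B` contracted: vertices are the components
of `(V, B)` and edges are `T \ B`. -/
noncomputable def contractIn (G : PottsGraph V E) (T B : Finset E) :
    PottsGraph (G.Comp B) ↥(T \ B : Finset E) :=
  ⟨fun f => (G.ends f.1).map (Quotient.mk (G.compSetoid B))⟩

/-- The edges of `G` with both ends inside `P`. -/
noncomputable def edgesIn (G : PottsGraph V E) (P : Finset V) : Finset E :=
  Finset.univ.filter fun e => ∀ v ∈ G.ends e, v ∈ P

/-- The subgraph of `G` induced by the vertex set `P`. -/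
noncomputable def induce (G : PottsGraph V E) (P : Finset V) : PottsGraph ↥P ↥(G.edgesIn P) :=
  ⟨fun e => (G.ends e.1).pmap (fun v hv => (⟨v, hv⟩ : ↥P))
    (by have he := e.2; simp only [edgesIn, Finset.mem_filter] at he; exact he.2)⟩

/-- The block `B` induces a connected subgraph of `G`. -/
def BlockConnected (G : PottsGraph V E) (B : Finset V) : Prop :=
  ∀ u ∈ B, ∀ v ∈ B, Relation.EqvGen (G.adjRel (G.edgesIn B)) u v

/-- A connected partition of `V(G)`: every vertex lies in exactly one block,
blocks are nonempty, and each block induces a connected subgraph. -/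
def IsConnectedPartition (G : PottsGraph V E) (P : Finset (Finset V)) : Prop :=
  (∀ B ∈ P, B.Nonempty) ∧ (∀ v : V, ∃! B, B ∈ P ∧ v ∈ B) ∧ ∀ B ∈ P, G.BlockConnected B

/-- The partition `Π(A)` of `V(G)` into the components of `(V, A)`. -/
noncomputable def partitionOf (G : PottsGraph V E) (A : Finset E) : Finset (Finset V) :=
  Finset.univ.image fun c : G.Comp A => G.compVerts A c

/-- The internally inactive edges of the spanning tree `T`. -/
noncomputable def intInactives [LinearOrder E] (G : PottsGraph V E) (T : Finset E) : Finset E :=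
  T.filter fun e => ¬ G.IntActive T e

/-- The internally active edges of the spanning tree `T`. -/
noncomputable def intActives [LinearOrder E] (G : PottsGraph V E) (T : Finset E) : Finset E :=
  T.filter fun e => G.IntActive T e

/-- The externally active edges w.r.t. the spanning tree / forest `T`. -/
noncomputable def extActives [LinearOrder E] (G : PottsGraph V E) (T : Finset E) : Finset E :=
  Finset.univ.filter fun e => G.ExtActive T e

/-- Kronecker delta `δ(σ_i, σ_j)` for the two ends of the edge `e`. -/
noncomputable def edgeDelta (G : PottsGraph V E) {q : ℕ} (σ : V → Fin q) (e : E) : ℂ :=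
  Sym2.lift ⟨fun u v => if σ u = σ v then 1 else 0, fun u v => by simp [eq_comm]⟩ (G.ends e)

/-- The Potts partition function with variable interactions `J` and
field vectors `M`. -/
noncomputable def Zext (G : PottsGraph V E) (q : ℕ) (β : ℂ) (J : E → ℂ) (M : V → Fin q → ℂ) : ℂ :=
  ∑ σ : V → Fin q, Complex.exp (β * ((∑ e : E, J e * G.edgeDelta σ e) +
    ∑ v : V, ∑ α : Fin q, M v α * (if α = σ v then 1 else 0)))

/-- The Potts partition function with constant interaction `J` and constant
field `H` favouring the first spin. -/
noncomputable def ZconstField (G : PottsGraph V E) (q : ℕ) (β J H : ℂ) : ℂ :=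
  ∑ σ : V → Fin q, Complex.exp (β * (J * (∑ e : E, G.edgeDelta σ e) +
    H * ∑ v : V, (if (σ v : ℕ) = 0 then (1 : ℂ) else 0)))

/-- The zero-field Potts partition function with constant interaction `J`. -/
noncomputable def Zzero (G : PottsGraph V E) (q : ℕ) (β J : ℂ) : ℂ :=
  ∑ σ : V → Fin q, Complex.exp (β * J * ∑ e : E, G.edgeDelta σ e)

end PottsGraph

/-! Writing `e^{βJ_e δ} = 1 + (e^{βJ_e} - 1) δ` and summing out the spins gives the
Fortuin–Kasteleyn sum over all edge sets `A` of `X(A) ∏_{e ∈ A} (e^{βJ_e} - 1)`, where `X(A)`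
only depends on the components of `A`. Keep an edge of `A` iff its ends are not joined by larger
edges of `A`: the result is a forest `F` with the same components as `A`, and the edge sets
giving `F` are exactly `F ∪ S` with `S` a set of externally active edges of `F`. Summing
`∏_{e ∈ S} (e^{βJ_e} - 1)` over these `S` gives `∏_{e ∈ EA(F)} e^{βJ_e}`. -/

namespace PottsGraph

variable {V E : Type} (G : PottsGraph V E)

lemma exists_ends (e : E) : ∃ a b, G.ends e = s(a, b) :=
  Sym2.ind (f := fun z => ∃ a b, z = s(a, b)) (fun a b => ⟨a, b, rfl⟩) (G.ends e)

variable {G} {A B C : Finset E} {e m : E} {a b u v w : V}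

lemma Connects.refl (A : Finset E) (u : V) : G.Connects A u u := Relation.EqvGen.refl u

lemma Connects.symm (h : G.Connects A u v) : G.Connects A v u := Relation.EqvGen.symm _ _ h

lemma Connects.trans (h₁ : G.Connects A u v) (h₂ : G.Connects A v w) : G.Connects A u w :=
  Relation.EqvGen.trans _ _ _ h₁ h₂

lemma connects_iff_mk_eq : G.Connects A u v ↔ (⟦u⟧ : G.Comp A) = ⟦v⟧ :=
  (Quotient.eq (r := G.compSetoid A)).symm

lemma connects_of_ends (he : e ∈ A) (h : G.ends e = s(u, v)) : G.Connects A u v :=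
  Relation.EqvGen.rel _ _ ⟨e, he, h⟩

lemma Connects.mono (hAB : A ⊆ B) (h : G.Connects A u v) : G.Connects B u v :=
  Relation.EqvGen.mono (fun _ _ ⟨e, he, hee⟩ => ⟨e, hAB he, hee⟩) _ _ h

lemma endsConnected_iff (h : G.ends e = s(u, v)) :
    G.EndsConnected A e ↔ G.Connects A u v := by
  refine ⟨fun ⟨a, b, hab, hc⟩ => ?_, fun hc => ⟨u, v, h, hc⟩⟩
  rcases Sym2.eq_iff.mp (h.symm.trans hab) with ⟨rfl, rfl⟩ | ⟨rfl, rfl⟩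
  exacts [hc, hc.symm]

lemma EndsConnected.mono (hAB : A ⊆ B) (h : G.EndsConnected A e) : G.EndsConnected B e :=
  let ⟨a, b, hab, hc⟩ := h; ⟨a, b, hab, hc.mono hAB⟩

lemma Connects.mono_of_endsConnected (hAC : ∀ f ∈ A, f ∈ C ∨ G.EndsConnected C f)
    (h : G.Connects A u v) : G.Connects C u v := by
  induction h with
  | rel x y hxy =>
    obtain ⟨f, hf, hfxy⟩ := hxy
    rcases hAC f hf with hfC | hfC
    exacts [connects_of_ends hfC hfxy, (endsConnected_iff hfxy).mp hfC]
  | refl x => exact .refl C x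
  | symm x y _ ih => exact ih.symm
  | trans x y z _ _ ih₁ ih₂ => exact ih₁.trans ih₂

lemma EndsConnected.mono_of_endsConnected (hAC : ∀ f ∈ A, f ∈ C ∨ G.EndsConnected C f)
    (h : G.EndsConnected A e) : G.EndsConnected C e :=
  let ⟨a, b, hab, hc⟩ := h; ⟨a, b, hab, hc.mono_of_endsConnected hAC⟩

lemma Connects.cases_of_insert (hm : G.ends m = s(a, b)) (h : G.Connects (insert m B) u v) :
    G.Connects B u v ∨ (G.Connects B u a ∧ G.Connects B b v) ∨
      (G.Connects B u b ∧ G.Connects B a v) := by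
  simp only [connects_iff_mk_eq]
  induction h with
  | rel x y hxy =>
    obtain ⟨f, hf, hfxy⟩ := hxy
    rcases Finset.mem_insert.mp hf with rfl | hfB
    · rcases Sym2.eq_iff.mp (hfxy.symm.trans hm) with ⟨rfl, rfl⟩ | ⟨rfl, rfl⟩ <;> simp
    · exact .inl (connects_iff_mk_eq.mp (connects_of_ends hfB hfxy))
  | refl x => exact .inl rfl
  | symm x y _ ih => grind
  | trans x y z _ _ ih₁ ih₂ => grind

/-- A `u`–`v` path through `m` and a `u`–`v` path in `C` together join the ends of `m`. -/
lemma Connects.of_insert (hm : G.ends m = s(a, b)) (hBC : B ⊆ C)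
    (h : G.Connects (insert m B) u v) (huv : G.Connects C u v) :
    G.Connects B u v ∨ G.Connects C a b := by
  rcases h.cases_of_insert hm with h | ⟨hua, hbv⟩ | ⟨hub, hav⟩
  · exact .inl h
  · exact .inr (((hua.mono hBC).symm.trans huv).trans (hbv.mono hBC).symm)
  · exact .inr (((hav.mono hBC).trans huv.symm).trans (hub.mono hBC))

lemma Connects.sdiff_of_bridges {F D : Finset E} (hFC : F ⊆ C)
    (hbridge : ∀ f ∈ D, ¬ G.EndsConnected (C.erase f) f)
    (hD : ∀ f ∈ D, G.Connects (C.erase f) u v) (h : G.Connects F u v) :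
    G.Connects (F \ D) u v := by
  induction D using Finset.induction_on with
  | empty => simpa using h
  | insert f D _ ih =>
    have ih := ih (fun g hg => hbridge g (Finset.mem_insert_of_mem hg))
      (fun g hg => hD g (Finset.mem_insert_of_mem hg))
    rw [Finset.sdiff_insert]
    by_cases hf : f ∈ F \ D
    swap
    · rwa [Finset.erase_eq_of_notMem hf]
    rw [← Finset.insert_erase hf] at ih
    obtain ⟨a, b, hab⟩ := G.exists_ends f
    have hsub : (F \ D).erase f ⊆ C.erase f :=
      Finset.erase_subset_erase f (Finset.sdiff_subset.trans hFC)
    refine (ih.of_insert hab hsub (hD f (Finset.mem_insert_self f D))).resolve_right ?_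
    exact fun hfab => hbridge f (Finset.mem_insert_self f D) ((endsConnected_iff hab).mpr hfab)

section Spins

variable {q : ℕ} {σ : V → Fin q}

lemma edgeDelta_of_ends (hab : G.ends e = s(a, b)) :
    G.edgeDelta σ e = if σ a = σ b then 1 else 0 := by
  simp only [edgeDelta, hab, Sym2.lift_mk]

lemma prod_edgeDelta :
    ∏ e ∈ A, G.edgeDelta σ e = if ∀ u v, G.Connects A u v → σ u = σ v then 1 else 0 := by
  split_ifs with h
  · refine Finset.prod_eq_one fun e he => ?_
    obtain ⟨a, b, hab⟩ := G.exists_ends e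
    rw [edgeDelta_of_ends hab, if_pos (h a b (connects_of_ends he hab))]
  · by_contra hne
    refine h fun u v huv => ?_
    induction huv with
    | rel x y hxy =>
      obtain ⟨e, he, hexy⟩ := hxy
      have hδ := Finset.prod_ne_zero_iff.mp hne e he
      rw [edgeDelta_of_ends hexy] at hδ
      exact of_not_not fun hxy => hδ (if_neg hxy)
    | refl x => rfl
    | symm x y _ ih => exact ih.symm
    | trans x y z _ _ ih₁ ih₂ => exact ih₁.trans ih₂

variable [Fintype V]

/-- Only spin configurations constant on the components of `(V, A)` survive. -/
lemma sum_prod_edgeDelta_mul_prod (g : V → Fin q → ℂ) :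
    ∑ σ : V → Fin q, (∏ e ∈ A, G.edgeDelta σ e) * ∏ v, g v (σ v) =
      ∏ c : G.Comp A, ∑ α, ∏ v ∈ G.compVerts A c, g v α := by
  simp_rw [prod_edgeDelta, ite_mul, one_mul, zero_mul, ← Finset.sum_filter]
  calc _ = ∑ τ : G.Comp A → Fin q, ∏ v, g v (τ (Quotient.mk _ v)) := by
        refine (Finset.sum_bij (fun (τ : G.Comp A → Fin q) _ v => τ (Quotient.mk _ v))
          (fun τ _ => ?_) (fun τ₁ _ τ₂ _ h => ?_) (fun σ hσ => ?_) fun _ _ => rfl).symm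
        · exact Finset.mem_filter.mpr ⟨Finset.mem_univ _, fun u v huv =>
            congrArg τ (Quotient.sound huv)⟩
        · exact funext fun c => Quotient.inductionOn c (congrFun h)
        · exact ⟨Quotient.lift σ (Finset.mem_filter.mp hσ).2, Finset.mem_univ _, rfl⟩
    _ = ∑ τ : G.Comp A → Fin q, ∏ c, ∏ v ∈ G.compVerts A c, g v (τ c) := by
        refine Finset.sum_congr rfl fun τ _ => ?_
        rw [← Finset.prod_fiberwise Finset.univ (Quotient.mk (G.compSetoid A))]
        refine Finset.prod_congr rfl fun c _ =>
          Finset.prod_congr (by ext; simp [compVerts]) fun v hv => ?_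
        simp only [compVerts, Finset.mem_filter] at hv
        rw [hv.2]
    _ = _ := (Fintype.prod_sum fun c α => ∏ v ∈ G.compVerts A c, g v α).symm

end Spins

section FortuinKasteleyn

variable [Fintype V] {q : ℕ} (β : ℂ) (M : V → Fin q → ℂ)

variable (G) in
/-- `X(A)` of the paper, for an arbitrary edge set `A`. -/
noncomputable def fieldFactor (A : Finset E) : ℂ :=
  ∏ c : G.Comp A, ∑ α : Fin q, Complex.exp (β * G.compWeight A M c α)

lemma fieldFactor_congr (h : G.compSetoid A = G.compSetoid B) :
    G.fieldFactor β M A = G.fieldFactor β M B := by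
  unfold fieldFactor compWeight compVerts Comp instFintypeComp
  rw [h]

lemma fieldFactor_eq_sum_spins (A : Finset E) :
    G.fieldFactor β M A = ∑ σ : V → Fin q,
      (∏ e ∈ A, G.edgeDelta σ e) * ∏ v, Complex.exp (β * M v (σ v)) := by
  rw [sum_prod_edgeDelta_mul_prod fun v α => Complex.exp (β * M v α)]
  refine Finset.prod_congr rfl fun c _ => Finset.sum_congr rfl fun α _ => ?_
  rw [compWeight, Finset.sum_apply, Finset.mul_sum, Complex.exp_sum]

omit [Fintype V] in
lemma exp_mul_edgeDelta (J : ℂ) (σ : V → Fin q) (e : E) :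
    Complex.exp (β * (J * G.edgeDelta σ e)) =
      (Complex.exp (β * J) - 1) * G.edgeDelta σ e + 1 := by
  obtain ⟨a, b, hab⟩ := G.exists_ends e
  rw [edgeDelta_of_ends hab]
  split_ifs <;> simp

/-- The Fortuin–Kasteleyn expansion. -/
lemma Zext_eq_sum_fieldFactor [Fintype E] (J : E → ℂ) :
    G.Zext q β J M =
      ∑ A : Finset E, G.fieldFactor β M A * ∏ e ∈ A, (Complex.exp (β * J e) - 1) := by
  have hspins : ∀ σ : V → Fin q,
      Complex.exp (β * ((∑ e, J e * G.edgeDelta σ e) +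
        ∑ v, ∑ α, M v α * (if α = σ v then 1 else 0))) =
      ∑ A : Finset E, (∏ e ∈ A, (Complex.exp (β * J e) - 1) * G.edgeDelta σ e) *
        ∏ v, Complex.exp (β * M v (σ v)) := by
    intro σ
    simp only [mul_ite, mul_one, mul_zero, Finset.sum_ite_eq', Finset.mem_univ, if_true,
      mul_add, Complex.exp_add, Finset.mul_sum, Complex.exp_sum, exp_mul_edgeDelta,
      Finset.prod_add_one, Finset.powerset_univ, Finset.sum_mul]
  calc G.Zext q β J M
      = ∑ A : Finset E, ∑ σ : V → Fin q, (∏ e ∈ A, (Complex.exp (β * J e) - 1) *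
          G.edgeDelta σ e) * ∏ v, Complex.exp (β * M v (σ v)) := by
        rw [Zext]
        exact (Finset.sum_congr rfl fun σ _ => hspins σ).trans Finset.sum_comm
    _ = _ := by
        refine Finset.sum_congr rfl fun A _ => ?_
        rw [fieldFactor_eq_sum_spins, Finset.sum_mul]
        refine Finset.sum_congr rfl fun σ _ => ?_
        rw [Finset.prod_mul_distrib]
        ring

end FortuinKasteleyn

section Kruskal

variable [LinearOrder E]

-- The definitions above use the classical `DecidableEq E`; this keeps `erase`/`insert` below
-- syntactically equal to theirs once `[LinearOrder E]` brings its own instance.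
noncomputable local instance (priority := 2000) : DecidableEq E :=
  fun _ _ => Classical.propDecidable _

variable (G) in
/-- The forest that Kruskal's algorithm extracts from `A` scanning edges in decreasing order. -/
noncomputable def kruskalForest (A : Finset E) : Finset E :=
  A.filter fun e => ¬ G.EndsConnected (A.filter (e < ·)) e

lemma kruskalForest_subset : G.kruskalForest A ⊆ A := Finset.filter_subset _ _

lemma isForest_of_forall_not_endsConnected_gt {F : Finset E}
    (h : ∀ e ∈ F, ¬ G.EndsConnected (F.filter (e < ·)) e) : G.IsForest F := by
  by_contra hF
  set N := F.filter fun e => G.EndsConnected (F.erase e) e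
  have hN : N.Nonempty := by
    simpa [N, IsForest, Finset.filter_nonempty_iff] using hF
  set e := N.min' hN
  obtain ⟨heF, he⟩ := Finset.mem_filter.mp (N.min'_mem hN)
  obtain ⟨u, v, huv⟩ := G.exists_ends e
  have hbridge : ∀ f ∈ F.filter (· < e), ¬ G.EndsConnected (F.erase f) f := fun f hf hfN =>
    (Finset.mem_filter.mp hf).2.not_ge
      (N.min'_le f (Finset.mem_filter.mpr ⟨(Finset.mem_filter.mp hf).1, hfN⟩))
  have hconn := ((endsConnected_iff huv).mp he).sdiff_of_bridges (Finset.erase_subset e F)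
    hbridge fun f hf =>
      connects_of_ends (Finset.mem_erase.mpr ⟨(Finset.mem_filter.mp hf).2.ne', heF⟩) huv
  refine h e heF ((endsConnected_iff huv).mpr (hconn.mono fun x hx => ?_))
  simp only [Finset.mem_sdiff, Finset.mem_erase, Finset.mem_filter, not_and, not_lt] at hx ⊢
  exact ⟨hx.1.2, lt_of_le_of_ne (hx.2 hx.1.2) (Ne.symm hx.1.1)⟩

lemma isForest_kruskalForest : G.IsForest (G.kruskalForest A) :=
  isForest_of_forall_not_endsConnected_gt fun _ he hEC =>
    (Finset.mem_filter.mp he).2 (hEC.mono (Finset.filter_subset_filter _ kruskalForest_subset))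

lemma endsConnected_kruskalForest_gt [Finite E] (he : e ∈ A) (heK : e ∉ G.kruskalForest A) :
    G.EndsConnected ((G.kruskalForest A).filter (e < ·)) e := by
  induction e using WellFoundedGT.induction with
  | _ e ih =>
    have hEC : G.EndsConnected (A.filter (e < ·)) e := by
      simpa [kruskalForest, he] using heK
    refine hEC.mono_of_endsConnected fun g hg => ?_
    obtain ⟨hgA, heg⟩ := Finset.mem_filter.mp hg
    by_cases hgK : g ∈ G.kruskalForest A
    · exact .inl (Finset.mem_filter.mpr ⟨hgK, heg⟩)
    · refine .inr ((ih g heg hgA hgK).mono fun x hx => ?_)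
      obtain ⟨hxK, hgx⟩ := Finset.mem_filter.mp hx
      exact Finset.mem_filter.mpr ⟨hxK, heg.trans hgx⟩

lemma connects_kruskalForest_iff [Finite E] :
    G.Connects (G.kruskalForest A) u v ↔ G.Connects A u v := by
  refine ⟨Connects.mono kruskalForest_subset, Connects.mono_of_endsConnected fun f hf => ?_⟩
  by_cases hfK : f ∈ G.kruskalForest A
  · exact .inl hfK
  · exact .inr ((endsConnected_kruskalForest_gt hf hfK).mono (Finset.filter_subset _ _))

lemma compSetoid_kruskalForest [Finite E] :
    G.compSetoid (G.kruskalForest A) = G.compSetoid A :=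
  Setoid.ext fun _ _ => connects_kruskalForest_iff

lemma extActive_of_mem_sdiff_kruskalForest [Finite E] (he : e ∈ A \ G.kruskalForest A) :
    G.ExtActive (G.kruskalForest A) e := by
  obtain ⟨heA, heK⟩ := Finset.mem_sdiff.mp he
  have hgt := endsConnected_kruskalForest_gt heA heK
  refine ⟨heK, hgt.mono (Finset.filter_subset _ _), fun f hf => ?_⟩
  rcases Finset.mem_insert.mp hf with rfl | hf
  · exact le_rfl
  obtain ⟨hfK, hsep⟩ := Finset.mem_filter.mp hf
  by_contra hfe
  refine hsep (hgt.mono fun x hx => ?_)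
  obtain ⟨hxK, hex⟩ := Finset.mem_filter.mp hx
  exact Finset.mem_erase.mpr ⟨(lt_trans (not_le.mp hfe) hex).ne', hxK⟩

lemma kruskalForest_union_of_extActive {F S : Finset E} (hF : G.IsForest F)
    (hS : ∀ s ∈ S, G.ExtActive F s) : G.kruskalForest (F ∪ S) = F := by
  ext e
  simp only [kruskalForest, Finset.mem_filter, Finset.mem_union]
  constructor
  · rintro ⟨heF | heS, hne⟩
    · exact heF
    obtain ⟨heF, hEC, hcyc⟩ := hS e heS
    obtain ⟨u, v, huv⟩ := G.exists_ends e
    rw [endsConnected_iff huv] at hEC hne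
    -- every edge of `F` below `e` is off the cycle closed by `e`
    have hoff : ∀ f ∈ F.filter (· < e), G.Connects (F.erase f) u v := by
      intro f hf
      obtain ⟨hfF, hfe⟩ := Finset.mem_filter.mp hf
      by_contra hsep
      refine hfe.not_ge (hcyc f (Finset.mem_insert_of_mem (Finset.mem_filter.mpr ⟨hfF, ?_⟩)))
      rwa [endsConnected_iff huv]
    refine absurd ((hEC.sdiff_of_bridges subset_rfl
      (fun f hf => hF f (Finset.mem_filter.mp hf).1) hoff).mono fun x hx => ?_) hne
    simp only [Finset.mem_sdiff, Finset.mem_filter, not_and, not_lt] at hx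
    exact Finset.mem_filter.mpr ⟨Finset.mem_union_left S hx.1,
      lt_of_le_of_ne (hx.2 hx.1) fun h => heF (h ▸ hx.1)⟩
  · refine fun heF => ⟨.inl heF, fun hEC => hF e heF
      (hEC.mono_of_endsConnected fun g hg => ?_)⟩
    obtain ⟨hgFS, heg⟩ := Finset.mem_filter.mp hg
    rcases Finset.mem_union.mp hgFS with hgF | hgS
    · exact .inl (Finset.mem_erase.mpr ⟨heg.ne', hgF⟩)
    obtain ⟨-, -, hcyc⟩ := hS g hgS
    by_contra! hsep
    exact heg.not_ge (hcyc e (Finset.mem_insert_of_mem (Finset.mem_filter.mpr ⟨heF, hsep.2⟩)))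

lemma filter_kruskalForest_eq [Fintype E] {F : Finset E}
    [DecidablePred (G.kruskalForest · = F)] (hF : G.IsForest F) :
    Finset.univ.filter (G.kruskalForest · = F) = (G.extActives F).powerset.image (F ∪ ·) := by
  ext A
  simp only [Finset.mem_filter, Finset.mem_univ, true_and, Finset.mem_image,
    Finset.mem_powerset]
  constructor
  · rintro rfl
    refine ⟨A \ G.kruskalForest A, fun e he => ?_,
      Finset.union_sdiff_of_subset kruskalForest_subset⟩
    exact Finset.mem_filter.mpr ⟨Finset.mem_univ e, extActive_of_mem_sdiff_kruskalForest he⟩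
  · rintro ⟨S, hS, rfl⟩
    exact kruskalForest_union_of_extActive hF fun s hs => (Finset.mem_filter.mp (hS hs)).2

lemma sum_fiber_kruskalForest [Fintype V] [Fintype E] {q : ℕ} (β : ℂ) (M : V → Fin q → ℂ)
    (γ : E → ℂ) {F : Finset E} [DecidablePred (G.kruskalForest · = F)] (hF : G.IsForest F) :
    ∑ A ∈ Finset.univ.filter (G.kruskalForest · = F),
        G.fieldFactor β M A * ∏ e ∈ A, γ e =
      G.fieldFactor β M F * (∏ e ∈ F, γ e) * ∏ e ∈ G.extActives F, (γ e + 1) := by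
  have hdisj : ∀ S ⊆ G.extActives F, Disjoint F S := fun S hS =>
    Finset.disjoint_right.mpr fun e he => (Finset.mem_filter.mp (hS he)).2.1
  have hinj : Set.InjOn (F ∪ ·) ((G.extActives F).powerset : Set (Finset E)) :=
    fun S₁ h₁ S₂ h₂ h => by
      rw [← Finset.union_sdiff_cancel_left (hdisj S₁ (Finset.mem_powerset.mp h₁)),
        ← Finset.union_sdiff_cancel_left (hdisj S₂ (Finset.mem_powerset.mp h₂))]
      exact congrArg (· \ F) h
  rw [filter_kruskalForest_eq hF, Finset.sum_image hinj, Finset.prod_add_one, Finset.mul_sum]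
  refine Finset.sum_congr rfl fun S hS => ?_
  have hS := Finset.mem_powerset.mp hS
  have hunion := kruskalForest_union_of_extActive hF fun s hs => (Finset.mem_filter.mp (hS hs)).2
  have hsetoid : G.compSetoid (F ∪ S) = G.compSetoid F := by
    rw [← compSetoid_kruskalForest (A := F ∪ S), hunion]
  rw [fieldFactor_congr β M hsetoid, Finset.prod_union (hdisj S hS), mul_assoc]

end Kruskal

end PottsGraph

theorem Zext_spanning_forest_expansion_general {V E : Type} [Fintype V] [Fintype E]
    [LinearOrder E] (G : PottsGraph V E) (q : ℕ) (β : ℂ)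
    (J : E → ℂ) (M : V → Fin q → ℂ) :
    G.Zext q β J M =
      ∑ F ∈ Finset.univ.filter (fun F => G.IsForest F),
        (∏ c : G.Comp F, ∑ α : Fin q, Complex.exp (β * G.compWeight F M c α)) *
        (∏ e ∈ F, (Complex.exp (β * J e) - 1)) *
        ∏ e ∈ G.extActives F, Complex.exp (β * J e) := by
  rw [PottsGraph.Zext_eq_sum_fieldFactor,
    ← Finset.sum_fiberwise_of_maps_to (g := G.kruskalForest) fun A _ =>
      Finset.mem_filter.mpr ⟨Finset.mem_univ _, PottsGraph.isForest_kruskalForest⟩]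
  refine Finset.sum_congr rfl fun F hF => ?_
  rw [PottsGraph.sum_fiber_kruskalForest β M _ (Finset.mem_filter.mp hF).2,
    PottsGraph.fieldFactor]
  simp only [sub_add_cancel]

/-- Spanning forest expansion of the Potts partition function in
an external field:
`Z_ext(G) = Σ_{F∈𝓕(G)} X(F) (∏_{e∈F}(e^{βJ_e}−1)) (∏_{e∈EA(F)} e^{βJ_e})`. -/
theorem Zext_spanning_forest_expansion {V E : Type} [Fintype V] [Fintype E]
    [LinearOrder E] (G : PottsGraph V E) (q : ℕ) (hq : 1 ≤ q) (β : ℂ)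
    (J : E → ℂ) (M : V → Fin q → ℂ) :
    G.Zext q β J M =
      ∑ F ∈ Finset.univ.filter (fun F => G.IsForest F),
        (∏ c : G.Comp F, ∑ α : Fin q, Complex.exp (β * G.compWeight F M c α)) *
        (∏ e ∈ F, (Complex.exp (β * J e) - 1)) *
        ∏ e ∈ G.extActives F, Complex.exp (β * J e) :=
  Zext_spanning_forest_expansion_general G q β J M
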